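/- arXiv:1605.01799 — 3 statements merged into one kernel-verified Lean document; each statement's English description precedes it below -/
import Mathlib

section
/- Let J(x) = (1/2)(Σᵢ xᵢ²/aᵢ² - 1) with all aᵢ > 0, and define φ(x,t) = -min_{v∈ℝⁿ} { J*(v) + t‖v‖₁ - ⟨x,v⟩ }. Then for all x ∈ ℝⁿ and t > 0, φ(x,t) = -1/2 + Σ_{i : |xᵢ| > t} (1/2)((|xᵢ| - t)/aᵢ)². -/
/-!
The conjugate of `J` separates over the coordinates: `J*(v) = 1/2 + ∑ aᵢ² vᵢ² / 2`, the supremum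
being attained at `xᵢ = aᵢ² vᵢ`. Hence the Hopf objective is a constant plus a sum of
one-dimensional problems `min_w (a² w² / 2 + t |w| - c w)`, each solved by soft thresholding with
value `-((|c| - t)⁺ / a)² / 2`; only the coordinates with `|xᵢ| > t` contribute.
-/

open scoped RealInnerProductSpace ENNReal

open Set Finset

section Scalar

variable {a : ℝ}

theorem isGreatest_range_mul_sub_half_sq_div_sq (ha : a ≠ 0) (v : ℝ) :
    IsGreatest (range fun y => v * y - 1 / 2 * (y ^ 2 / a ^ 2)) (1 / 2 * a ^ 2 * v ^ 2) := by
  refine ⟨⟨a ^ 2 * v, by field_simp; ring⟩, ?_⟩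
  rintro _ ⟨y, rfl⟩
  have hsq : (a * v - y / a) ^ 2 = a ^ 2 * v ^ 2 - 2 * v * y + y ^ 2 / a ^ 2 := by
    field_simp; ring
  linarith [sq_nonneg (a * v - y / a)]

theorem isLeast_range_half_sq_add_abs_sub_mul (ha : a ≠ 0) (t c : ℝ) :
    IsLeast (range fun w => 1 / 2 * a ^ 2 * w ^ 2 + t * |w| - c * w)
      (-(1 / 2) * (max (|c| - t) 0 / a) ^ 2) := by
  set p := max (|c| - t) 0
  have hp : (|c| - t) * p = p ^ 2 := by
    rcases le_total (|c| - t) 0 with h | h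
    · simp [p, max_eq_right h]
    · simp only [p, max_eq_left h, sq]
  refine ⟨?_, ?_⟩
  · -- soft thresholding: the minimiser is `w = sign c * p / a²`
    have hval : ∀ w, |w| = p / a ^ 2 → c * w = |c| * (p / a ^ 2) →
        1 / 2 * a ^ 2 * w ^ 2 + t * |w| - c * w = -(1 / 2) * (p / a) ^ 2 := by
      intro w habs hcw
      rw [hcw, ← sq_abs w, habs]
      field_simp
      linear_combination (-2) * hp
    rcases le_total 0 c with hc | hc
    · exact ⟨p / a ^ 2, hval _ (abs_of_nonneg (by positivity)) (by rw [abs_of_nonneg hc])⟩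
    · refine ⟨-(p / a ^ 2), hval _ (by rw [abs_neg, abs_of_nonneg (by positivity)]) ?_⟩
      rw [abs_of_nonpos hc]; ring
  · rintro _ ⟨w, rfl⟩
    have hcw : c * w ≤ |c| * |w| := (le_abs_self _).trans (abs_mul c w).le
    have hpw : (|c| - t) * |w| ≤ p * |w| := mul_le_mul_of_nonneg_right (le_max_left _ _) (abs_nonneg w)
    have hsq : (a * |w| - p / a) ^ 2 = a ^ 2 * w ^ 2 - 2 * p * |w| + (p / a) ^ 2 := by
      rw [← sq_abs w]; field_simp; ring
    nlinarith [sq_nonneg (a * |w| - p / a)]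

end Scalar

section Separable

variable {M : Type*} [AddCommMonoid M] [PartialOrder M] [IsOrderedAddMonoid M]

theorem isLeast_range_const_add {α : Type*} {g : α → M} {m : M} (c : M)
    (hg : IsLeast (range g) m) : IsLeast (range fun x => c + g x) (c + m) := by
  obtain ⟨⟨x, rfl⟩, hle⟩ := hg
  refine ⟨⟨x, rfl⟩, ?_⟩
  rintro _ ⟨y, rfl⟩
  exact add_le_add_right (hle ⟨y, rfl⟩) c

theorem isGreatest_range_const_add {α : Type*} {g : α → M} {m : M} (c : M)
    (hg : IsGreatest (range g) m) : IsGreatest (range fun x => c + g x) (c + m) :=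
  isLeast_range_const_add (M := Mᵒᵈ) c hg

variable {ι : Type*} [Fintype ι] {p : ℝ≥0∞} {β : ι → Type*}

theorem isLeast_range_sum_apply {f : ∀ i, β i → M} {m : ι → M}
    (hf : ∀ i, IsLeast (range (f i)) (m i)) :
    IsLeast (range fun w : PiLp p β => ∑ i, f i (w i)) (∑ i, m i) := by
  choose w hw using fun i => (hf i).1
  refine ⟨⟨WithLp.toLp p w, by simp [hw]⟩, ?_⟩
  rintro _ ⟨v, rfl⟩
  exact sum_le_sum fun i _ => (hf i).2 ⟨v i, rfl⟩

theorem isGreatest_range_sum_apply {f : ∀ i, β i → M} {m : ι → M}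
    (hf : ∀ i, IsGreatest (range (f i)) (m i)) :
    IsGreatest (range fun w : PiLp p β => ∑ i, f i (w i)) (∑ i, m i) :=
  isLeast_range_sum_apply (M := Mᵒᵈ) hf

end Separable

theorem EuclideanSpace.real_inner_eq_sum {ι : Type*} [Fintype ι] (u w : EuclideanSpace ℝ ι) :
    ⟪u, w⟫ = ∑ i, u i * w i := by
  simp [PiLp.inner_apply, mul_comm]

open Finset in
theorem hopf_formula_ellipsoid_l1_general (n : ℕ) (a : Fin n → ℝ) (ha : ∀ i, 0 < a i)
    (J : EuclideanSpace ℝ (Fin n) → ℝ)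
    (hJ : ∀ x, J x = (1/2) * ((∑ i, (x i)^2 / (a i)^2) - 1))
    (Jstar : EuclideanSpace ℝ (Fin n) → ℝ)
    (hJstar : ∀ v, IsLUB (Set.range fun x : EuclideanSpace ℝ (Fin n) => ⟪v, x⟫ - J x) (Jstar v))
    (x : EuclideanSpace ℝ (Fin n)) (t : ℝ) :
    IsLeast (Set.range fun v : EuclideanSpace ℝ (Fin n) =>
        Jstar v + t * (∑ i, |v i|) - ⟪x, v⟫)
      (-(-(1/2) + ∑ i ∈ Finset.univ.filter (fun i => t < |x i|),
          (1/2) * ((|x i| - t) / a i)^2)) := by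
  have ha₀ : ∀ i, a i ≠ 0 := fun i => (ha i).ne'
  have hJstar_eq (v : EuclideanSpace ℝ (Fin n)) :
      Jstar v = 1 / 2 + ∑ i, 1 / 2 * a i ^ 2 * v i ^ 2 := by
    have hsplit : (fun y : EuclideanSpace ℝ (Fin n) => ⟪v, y⟫ - J y) =
        fun y => 1 / 2 + ∑ i, (v i * y i - 1 / 2 * (y i ^ 2 / a i ^ 2)) := by
      ext y
      rw [EuclideanSpace.real_inner_eq_sum, hJ, sum_sub_distrib, ← mul_sum]
      ring
    refine (hJstar v).unique (IsGreatest.isLUB ?_)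
    rw [hsplit]
    exact isGreatest_range_const_add _ <| isGreatest_range_sum_apply fun i =>
      isGreatest_range_mul_sub_half_sq_div_sq (ha₀ i) (v i)
  have hsplit : (fun v : EuclideanSpace ℝ (Fin n) => Jstar v + t * (∑ i, |v i|) - ⟪x, v⟫) =
      fun v => 1 / 2 + ∑ i, (1 / 2 * a i ^ 2 * v i ^ 2 + t * |v i| - x i * v i) := by
    ext v
    rw [hJstar_eq, EuclideanSpace.real_inner_eq_sum, mul_sum, sum_sub_distrib, sum_add_distrib]
    ring
  have hvalue : -(-(1 / 2) + ∑ i ∈ univ.filter (fun i => t < |x i|),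
      1 / 2 * ((|x i| - t) / a i) ^ 2) = 1 / 2 + ∑ i, -(1 / 2) * (max (|x i| - t) 0 / a i) ^ 2 := by
    rw [sum_filter, neg_add, neg_neg, ← sum_neg_distrib]
    congr 1
    refine sum_congr rfl fun i _ => ?_
    split_ifs with h
    · rw [max_eq_left (sub_pos.2 h).le]; ring
    · rw [max_eq_right (sub_nonpos.2 (not_lt.1 h))]; ring
  rw [hsplit, hvalue]
  exact isLeast_range_const_add _ <| isLeast_range_sum_apply fun i =>
    isLeast_range_half_sq_add_abs_sub_mul (ha₀ i) t (x i)

open Finset in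
/-- For `J(x) = (1/2)(∑ xᵢ²/aᵢ² - 1)` and `φ(x,t) = -min_v { J*(v) + t‖v‖₁ - ⟨x,v⟩ }`,
we have `φ(x,t) = -1/2 + ∑_{|xᵢ| > t} (1/2)((|xᵢ| - t)/aᵢ)²`. -/
theorem hopf_formula_ellipsoid_l1 (n : ℕ) (a : Fin n → ℝ) (ha : ∀ i, 0 < a i)
    (J : EuclideanSpace ℝ (Fin n) → ℝ)
    (hJ : ∀ x, J x = (1/2) * ((∑ i, (x i)^2 / (a i)^2) - 1))
    (Jstar : EuclideanSpace ℝ (Fin n) → ℝ)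
    (hJstar : ∀ v, IsLUB (Set.range fun x : EuclideanSpace ℝ (Fin n) => ⟪v, x⟫ - J x) (Jstar v))
    (x : EuclideanSpace ℝ (Fin n)) (t : ℝ) (ht : 0 < t) :
    IsLeast (Set.range fun v : EuclideanSpace ℝ (Fin n) =>
        Jstar v + t * (∑ i, |v i|) - ⟪x, v⟫)
      (-(-(1/2) + ∑ i ∈ Finset.univ.filter (fun i => t < |x i|),
          (1/2) * ((|x i| - t) / a i)^2)) :=
  hopf_formula_ellipsoid_l1_general n a ha J hJ Jstar hJstar x t
end

section
/- For x ∈ ℝⁿ and α > 0, the set of minimizers over v ∈ ℝⁿ of v ↦ (1/2)‖v - x‖₂² - α‖v‖₂ is: {x + α·x/‖x‖₂} if x ≠ 0, and {α·θ : ‖θ‖₂ = 1} if x = 0 (for n ≥ 1). -/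
/-!
Completing the square and Cauchy–Schwarz give
`½‖v - x‖² - α‖v‖ = ½(‖v‖ - ‖x‖ - α)² + (‖v‖‖x‖ - ⟪v, x⟫) - (α‖x‖ + α²/2)`,
a sum of two nonnegative terms minus a constant. So the minimum value is `-(α‖x‖ + α²/2)`,
attained exactly when `‖v‖ = ‖x‖ + α` and `v` is a nonnegative multiple of `x`: this pins down
`v = x + (α/‖x‖) x` when `x ≠ 0`, and leaves the whole sphere of radius `α` when `x = 0`.
-/

open RealInnerProductSpace

namespace Stretch

theorem norm_eq_iff_exists_unit_smul {V : Type*} [NormedAddCommGroup V] [NormedSpace ℝ V]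
    {α : ℝ} (hα : 0 < α) (v : V) :
    ‖v‖ = α ↔ ∃ θ : V, ‖θ‖ = 1 ∧ v = α • θ := by
  constructor
  · intro hv
    refine ⟨α⁻¹ • v, ?_, ?_⟩
    · rw [norm_smul, hv, Real.norm_of_nonneg (inv_nonneg.mpr hα.le), inv_mul_cancel₀ hα.ne']
    · rw [smul_inv_smul₀ hα.ne']
  · rintro ⟨θ, hθ, rfl⟩
    rw [norm_smul, hθ, Real.norm_of_nonneg hα.le, mul_one]

variable {E : Type*} [NormedAddCommGroup E] [InnerProductSpace ℝ E]

noncomputable def objective (x : E) (α : ℝ) (v : E) : ℝ := (1 / 2) * ‖v - x‖ ^ 2 - α * ‖v‖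

theorem objective_eq (x : E) (α : ℝ) (v : E) :
    objective x α v =
      (1 / 2) * (‖v‖ - ‖x‖ - α) ^ 2 + (‖v‖ * ‖x‖ - ⟪v, x⟫) - (α * ‖x‖ + α ^ 2 / 2) := by
  rw [objective, norm_sub_sq_real]
  ring

theorem le_objective (x : E) (α : ℝ) (v : E) : -(α * ‖x‖ + α ^ 2 / 2) ≤ objective x α v := by
  rw [objective_eq]
  nlinarith [real_inner_le_norm v x, sq_nonneg (‖v‖ - ‖x‖ - α)]

theorem objective_eq_iff (x : E) (α : ℝ) (v : E) :
    objective x α v = -(α * ‖x‖ + α ^ 2 / 2) ↔ ‖v‖ = ‖x‖ + α ∧ ⟪v, x⟫ = ‖v‖ * ‖x‖ := by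
  have hcs := real_inner_le_norm v x
  rw [objective_eq]
  constructor
  · intro h
    have hsq : (‖v‖ - ‖x‖ - α) ^ 2 = 0 := by nlinarith [sq_nonneg (‖v‖ - ‖x‖ - α)]
    constructor
    · linarith [pow_eq_zero_iff (n := 2) two_ne_zero |>.mp hsq]
    · nlinarith
  · rintro ⟨hnorm, hinner⟩
    rw [hinner, hnorm]
    ring

theorem norm_eq_add_and_inner_eq_iff {x : E} (hx : x ≠ 0) {α : ℝ} (hα : 0 ≤ α) (v : E) :
    ‖v‖ = ‖x‖ + α ∧ ⟪v, x⟫ = ‖v‖ * ‖x‖ ↔ v = x + (α / ‖x‖) • x := by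
  have hxpos : 0 < ‖x‖ := norm_pos_iff.mpr hx
  have hscale : x + (α / ‖x‖) • x = ‖x‖⁻¹ • ((‖x‖ + α) • x) := by
    rw [smul_smul, inv_mul_eq_div, add_div, div_self hxpos.ne', add_smul, one_smul]
  rw [inner_eq_norm_mul_iff_real, hscale]
  constructor
  · rintro ⟨hnorm, hparallel⟩
    rw [← hnorm, ← hparallel, inv_smul_smul₀ hxpos.ne']
  · rintro rfl
    have hnorm : ‖‖x‖⁻¹ • ((‖x‖ + α) • x)‖ = ‖x‖ + α := by
      rw [norm_smul, norm_smul, Real.norm_of_nonneg (by positivity),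
        Real.norm_of_nonneg (by positivity)]
      field_simp
    rw [hnorm, smul_smul, smul_smul, mul_comm, mul_inv_cancel₀ hxpos.ne', mul_one]
    exact ⟨rfl, rfl⟩

theorem exists_norm_eq_add_and_inner_eq [Nontrivial E] (x : E) {α : ℝ} (hα : 0 ≤ α) :
    ∃ w : E, ‖w‖ = ‖x‖ + α ∧ ⟪w, x⟫ = ‖w‖ * ‖x‖ := by
  by_cases hx : x = 0
  · obtain ⟨w, hw⟩ := exists_norm_eq E hα
    exact ⟨w, by simp [hx, hw]⟩
  · exact ⟨_, (norm_eq_add_and_inner_eq_iff hx hα _).mpr rfl⟩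

theorem setOf_forall_objective_le_eq [Nontrivial E] (x : E) {α : ℝ} (hα : 0 ≤ α) :
    {v | ∀ u, objective x α v ≤ objective x α u} =
      {v | ‖v‖ = ‖x‖ + α ∧ ⟪v, x⟫ = ‖v‖ * ‖x‖} := by
  obtain ⟨w, hw⟩ := exists_norm_eq_add_and_inner_eq x hα
  have hmin := (objective_eq_iff x α w).mpr hw
  ext v
  simp only [Set.mem_ofPred_eq, ← objective_eq_iff]
  exact ⟨fun h => le_antisymm (hmin ▸ h w) (le_objective x α v),
    fun h u => h ▸ le_objective x α u⟩

end Stretch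

/-- The set of minimizers of `v ↦ (1/2)‖v - x‖₂² - α‖v‖₂` is `{x + α·x/‖x‖}` if `x ≠ 0`
and `{αθ : ‖θ‖ = 1}` if `x = 0`. -/
theorem stretch2_minimizers (n : ℕ) (hn : 1 ≤ n)
    (x : EuclideanSpace ℝ (Fin n)) (α : ℝ) (hα : 0 < α)
    (F : EuclideanSpace ℝ (Fin n) → ℝ)
    (hF : ∀ v, F v = (1/2) * ‖v - x‖^2 - α * ‖v‖) :
    (x ≠ 0 → {v | ∀ u, F v ≤ F u} = {x + (α / ‖x‖) • x}) ∧
    (x = 0 → {v | ∀ u, F v ≤ F u} = {v | ∃ θ : EuclideanSpace ℝ (Fin n), ‖θ‖ = 1 ∧ v = α • θ}) := by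
  have : Nonempty (Fin n) := ⟨⟨0, hn⟩⟩
  obtain rfl : F = Stretch.objective x α := funext hF
  rw [Stretch.setOf_forall_objective_le_eq x hα.le]
  constructor
  · intro hx
    ext v
    exact Stretch.norm_eq_add_and_inner_eq_iff hx hα.le v
  · rintro rfl
    ext v
    simpa using Stretch.norm_eq_iff_exists_unit_smul hα v
end

section
/- For x ∈ ℝⁿ and α > 0, there exists β̄ ≥ 0 satisfying β̄ = α‖shrink₁(x, β̄)‖₁, and for any such β̄, shrink₁(x, β̄) is a minimizer over v ∈ ℝⁿ of v ↦ (1/2)‖v - x‖₂² + (α/2)‖v‖₁². -/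
/-!
Existence: `β ↦ α ∑ᵢ max (|xᵢ| - β) 0` is continuous and maps `[0, α‖x‖₁]` into itself, so it has
a fixed point. Optimality: `u = shrink₁(x, β̄)` satisfies `⟪v - u, u - x⟫ ≥ β̄ (‖u‖₁ - ‖v‖₁)`
coordinatewise, and with `β̄ = α‖u‖₁` this is exactly the first-order condition for the squared
ℓ¹ penalty, whose remaining term `α (‖v‖₁ - ‖u‖₁)² / 2` is nonnegative.
-/

open Finset RealInnerProductSpace

noncomputable def softThreshold (β t : ℝ) : ℝ := Real.sign t * max (|t| - β) 0

section SoftThreshold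

variable {β : ℝ} (t : ℝ)

theorem abs_softThreshold (hβ : 0 ≤ β) : |softThreshold β t| = max (|t| - β) 0 := by
  rcases lt_trichotomy t 0 with ht | rfl | ht
  · simp [softThreshold, Real.sign_of_neg ht]
  · simp [softThreshold, hβ]
  · simp [softThreshold, Real.sign_of_pos ht]

/-- `softThreshold β t` minimizes `w ↦ (w - t)^2 / 2 + β * |w|`, in variational form. -/
theorem mul_abs_softThreshold_sub_le (hβ : 0 ≤ β) (w : ℝ) :
    β * (|softThreshold β t| - |w|) ≤ (w - softThreshold β t) * (softThreshold β t - t) := by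
  have hw := neg_abs_le w
  have hw' := le_abs_self w
  rcases lt_trichotomy t 0 with ht | rfl | ht
  · rw [softThreshold, Real.sign_of_neg ht, abs_of_neg ht]
    rcases le_total β (-t) with hbt | hbt
    · rw [max_eq_left (by linarith), abs_of_nonpos (by linarith)]
      nlinarith
    · rw [max_eq_right (by linarith)]
      simp only [mul_zero, abs_zero]
      nlinarith
  · simpa [softThreshold] using mul_nonneg hβ (abs_nonneg w)
  · rw [softThreshold, Real.sign_of_pos ht, abs_of_pos ht]
    rcases le_total β t with hbt | hbt
    · rw [max_eq_left (by linarith), abs_of_nonneg (by linarith)]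
      nlinarith
    · rw [max_eq_right (by linarith)]
      simp only [mul_zero, abs_zero]
      nlinarith

end SoftThreshold

theorem exists_eq_mul_sum_max_abs_sub {ι : Type*} [Fintype ι] (a : ι → ℝ) {α : ℝ}
    (hα : 0 ≤ α) : ∃ β, 0 ≤ β ∧ β = α * ∑ i, max (|a i| - β) 0 := by
  set f : ℝ → ℝ := fun β => α * ∑ i, max (|a i| - β) 0
  have hf : Continuous f := by fun_prop
  have hf_le : ∀ β, 0 ≤ β → f β ≤ f 0 := fun β hβ =>
    mul_le_mul_of_nonneg_left
      (sum_le_sum fun i _ => max_le_max_right 0 (by linarith)) hα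
  have hf_nonneg : ∀ β, 0 ≤ f β := fun β =>
    mul_nonneg hα (sum_nonneg fun i _ => le_max_right _ _)
  obtain ⟨β, hβ, hfix⟩ := exists_mem_Icc_isFixedPt hf.continuousOn (hf_nonneg 0) (hf_nonneg 0)
    (hf_le _ (hf_nonneg 0))
  exact ⟨β, hβ.1, hfix.symm⟩

theorem mul_sum_abs_sub_le_inner_of_softThreshold {ι : Type*} [Fintype ι] {β : ℝ}
    (hβ : 0 ≤ β) {x u : EuclideanSpace ℝ ι} (hu : ∀ i, u i = softThreshold β (x i))
    (v : EuclideanSpace ℝ ι) : β * (∑ i, |u i| - ∑ i, |v i|) ≤ ⟪v - u, u - x⟫ := by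
  rw [PiLp.inner_apply, mul_sub, mul_sum, mul_sum, ← sum_sub_distrib]
  refine sum_le_sum fun i _ => ?_
  simp only [← mul_sub, PiLp.sub_apply, RCLike.inner_apply, conj_trivial, hu i, mul_comm (softThreshold β (x i) - x i)]
  exact mul_abs_softThreshold_sub_le (x i) hβ (v i)

/-- Sufficiency of the first-order condition for `v ↦ ‖v - x‖² / 2 + α N(v)² / 2`: the penalty
difference splits as `α N(u) (N(v) - N(u)) + α (N(v) - N(u))² / 2`, and the first term is controlled
by the hypothesis. -/
theorem half_norm_sub_sq_add_sq_le {E : Type*} [NormedAddCommGroup E] [InnerProductSpace ℝ E]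
    (N : E → ℝ) {α : ℝ} (hα : 0 ≤ α) {x u : E}
    (h : ∀ v, α * N u * (N u - N v) ≤ ⟪v - u, u - x⟫) (v : E) :
    1 / 2 * ‖u - x‖ ^ 2 + α / 2 * N u ^ 2 ≤ 1 / 2 * ‖v - x‖ ^ 2 + α / 2 * N v ^ 2 := by
  have hsplit : ‖v - x‖ ^ 2 = ‖v - u‖ ^ 2 + 2 * ⟪v - u, u - x⟫ + ‖u - x‖ ^ 2 := by
    rw [← norm_add_sq_real, sub_add_sub_cancel]
  nlinarith [h v, sq_nonneg ‖v - u‖, mul_nonneg hα (sq_nonneg (N v - N u))]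

open Finset in
/-- There exists `β̄ ≥ 0` with `β̄ = α‖shrink₁(x,β̄)‖₁`, and for any such `β̄`,
`shrink₁(x,β̄)` minimizes `v ↦ (1/2)‖v - x‖₂² + (α/2)‖v‖₁²`. -/
theorem prox_half_l1_squared (n : ℕ)
    (x : EuclideanSpace ℝ (Fin n)) (α : ℝ) (hα : 0 < α)
    (shrink : ℝ → EuclideanSpace ℝ (Fin n))
    (hshrink : ∀ β i, shrink β i = Real.sign (x i) * max (|x i| - β) 0)
    (F : EuclideanSpace ℝ (Fin n) → ℝ)
    (hF : ∀ v, F v = (1/2) * ‖v - x‖^2 + (α/2) * (∑ i, |v i|)^2) :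
    (∃ β : ℝ, 0 ≤ β ∧ β = α * ∑ i, |shrink β i|) ∧
    (∀ β : ℝ, 0 ≤ β → β = α * ∑ i, |shrink β i| → ∀ v, F (shrink β) ≤ F v) := by
  have hshrink' : ∀ β i, shrink β i = softThreshold β (x i) := hshrink
  constructor
  · obtain ⟨β, hβ, hfix⟩ := exists_eq_mul_sum_max_abs_sub x hα.le
    refine ⟨β, hβ, ?_⟩
    simp_rw [hshrink', abs_softThreshold _ hβ]
    exact hfix
  · intro β hβ hfix v
    rw [hF, hF]
    refine half_norm_sub_sq_add_sq_le (fun w => ∑ i, |w i|) hα.le (fun w => ?_) v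
    rw [← hfix]
    exact mul_sum_abs_sub_le_inner_of_softThreshold hβ (hshrink' β) w
end
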